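/- arXiv:2201.07637 — 5 statements merged into one kernel-verified Lean document; each statement's English description precedes it below -/
import Mathlib

section
/- For every positive integer n, the ordered Ramsey number of the nested matching NM_n versus the complete ordered graph on 3 vertices satisfies r_<(NM_n, K_3) ≤ (3 + √5)·n + 1. -/
/-- `G` (an ordered graph on `[m]`, modeled on `Fin m`) is an ordered subgraph of `H`
(on `Fin N`): there is a strictly increasing map preserving edges. -/
def OrderedSubgraph {m N : ℕ} (G : SimpleGraph (Fin m)) (H : SimpleGraph (Fin N)) : Prop :=
  ∃ φ : Fin m → Fin N, StrictMono φ ∧ ∀ i j : Fin m, G.Adj i j → H.Adj (φ i) (φ j)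

/-- The ordered Ramsey number `r_<(G, H)`: the least `N` such that every red-blue coloring
of the edges of the complete ordered graph on `N` vertices (given by its red graph `R`)
contains a red ordered copy of `G` or a blue ordered copy of `H`. -/
noncomputable def orderedRamsey {m k : ℕ} (G : SimpleGraph (Fin m)) (H : SimpleGraph (Fin k)) : ℕ :=
  sInf {N : ℕ | ∀ R : SimpleGraph (Fin N), OrderedSubgraph G R ∨ OrderedSubgraph H Rᶜ}

/-- The nested matching `NM_n`: the ordered graph on `2n` vertices with edges
`{i, 2n - i + 1}` (1-indexed), i.e. `i + j = 2n - 1` in 0-indexed form. -/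
def nestedMatching (n : ℕ) : SimpleGraph (Fin (2 * n)) :=
  SimpleGraph.fromRel (fun i j => (i : ℕ) + (j : ℕ) = 2 * n - 1)

/-- The ordered star `S_{l,r}` on `l + r - 1` vertices: the `l`-th vertex (1-indexed)
is adjacent to all other vertices. -/
def orderedStar (l r : ℕ) : SimpleGraph (Fin (l + r - 1)) :=
  SimpleGraph.fromRel (fun i _ => (i : ℕ) = l - 1)

/-- The join `G + H` of ordered graphs, identifying the rightmost vertex of `G`
with the leftmost vertex of `H`. -/
def orderedJoin {m k : ℕ} (G : SimpleGraph (Fin m)) (H : SimpleGraph (Fin k)) :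
    SimpleGraph (Fin (m + k - 1)) :=
  SimpleGraph.fromRel (fun i j =>
    (∃ a b : Fin m, G.Adj a b ∧ (i : ℕ) = (a : ℕ) ∧ (j : ℕ) = (b : ℕ)) ∨
    (∃ a b : Fin k, H.Adj a b ∧ (i : ℕ) = (a : ℕ) + (m - 1) ∧ (j : ℕ) = (b : ℕ) + (m - 1)))

/-- A connected ordered graph on `m` vertices is `n`-good if
`r_<(G, K_n) = (m-1)(n-1) + 1`. -/
def IsNGood {m : ℕ} (n : ℕ) (G : SimpleGraph (Fin m)) : Prop :=
  G.Connected ∧ orderedRamsey G (⊤ : SimpleGraph (Fin n)) = (m - 1) * (n - 1) + 1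

/-- Monotone caterpillar graphs: joins `S_{l₁,r₁} + ⋯ + S_{l_k,r_k}` of one-sided
ordered stars. -/
inductive IsMonotoneCaterpillar : ∀ {m : ℕ}, SimpleGraph (Fin m) → Prop
  | star {l r : ℕ} (hl : 1 ≤ l) (hr : 1 ≤ r) (h : l = 1 ∨ r = 1) :
      IsMonotoneCaterpillar (orderedStar l r)
  | join {m l r : ℕ} {G : SimpleGraph (Fin m)} (hl : 1 ≤ l) (hr : 1 ≤ r) (h : l = 1 ∨ r = 1)
      (hG : IsMonotoneCaterpillar G) : IsMonotoneCaterpillar (orderedJoin G (orderedStar l r))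

/-- A route in the `N × N` grid: a sequence of positions going only right or down. -/
def IsRoute {N : ℕ} (s : List (Fin N × Fin N)) : Prop :=
  s.Chain' (fun p q =>
    ((q.1 : ℕ) = (p.1 : ℕ) + 1 ∧ q.2 = p.2) ∨ (q.1 = p.1 ∧ (q.2 : ℕ) = (p.2 : ℕ) + 1))

/-!
Suppose the edges of `K_N` are coloured with no red `NM_n` and no blue triangle. Red edges
`{a, b}` with the same endpoint sum `a + b` are pairwise nested, so each such class has fewer
than `n` members. Ranking the edges of a class from the outside, an edge of rank `r` has
`r - 1 ≤ a` and `b ≤ N - r`, so its endpoint sum lies in `[2r - 1, 2N - 2r - 1]`; as the pair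
(rank, sum) determines the edge, there are at most `∑_{r=1}^{n-1} (2N - 4r + 1)` red edges.
Every blue neighbourhood is a red clique, hence has fewer than `2n` vertices. Counting all
`N(N - 1)/2` edges gives `N² - 6nN + 4N + 4n² - 6n + 2 ≤ 0`, which fails for
`N = 3n + ⌊√5 n⌋ + 1`.
-/

open Finset SimpleGraph

variable {m k n N : ℕ}

theorem OrderedSubgraph.of_le {G G' : SimpleGraph (Fin m)} {H : SimpleGraph (Fin N)}
    (h : OrderedSubgraph G' H) (hG : G ≤ G') : OrderedSubgraph G H :=
  let ⟨φ, hφ, hadj⟩ := h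
  ⟨φ, hφ, fun i j hij => hadj i j (hG hij)⟩

theorem SimpleGraph.IsNClique.orderedSubgraph_top {H : SimpleGraph (Fin N)} {s : Finset (Fin N)}
    (hs : H.IsNClique k s) : OrderedSubgraph (⊤ : SimpleGraph (Fin k)) H := by
  refine ⟨fun i => s.orderEmbOfFin hs.card_eq i, (s.orderEmbOfFin hs.card_eq).strictMono,
    fun i j hij => hs.isClique (s.orderEmbOfFin_mem _ i) (s.orderEmbOfFin_mem _ j) ?_⟩
  exact (s.orderEmbOfFin hs.card_eq).injective.ne hij.ne

theorem cliqueFree_of_not_orderedSubgraph_top {H : SimpleGraph (Fin N)}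
    (h : ¬ OrderedSubgraph (⊤ : SimpleGraph (Fin k)) H) : H.CliqueFree k :=
  fun _ hs => h hs.orderedSubgraph_top

theorem orderedSubgraph_nestedMatching {G : SimpleGraph (Fin N)} {a b : Fin n → Fin N}
    (ha : StrictMono a) (hb : StrictAnti b) (hab : ∀ i, a i < b i)
    (hadj : ∀ i, G.Adj (a i) (b i)) : OrderedSubgraph (nestedMatching n) G := by
  have hlt : ∀ i j, a i < b j := fun i j => by
    rcases le_total i j with h | h
    · exact (ha.monotone h).trans_lt (hab j)
    · exact (hab i).trans_le (hb.antitone h)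
  refine ⟨fun i => if h : (i : ℕ) < n then a ⟨i, h⟩ else b ⟨2 * n - 1 - i, by omega⟩,
    ?_, ?_⟩
  · intro i j hij
    have hij : (i : ℕ) < j := hij
    dsimp only
    split_ifs with hi hj hj
    · exact ha (Fin.mk_lt_mk.mpr hij)
    · exact hlt _ _
    · omega
    · exact hb (Fin.mk_lt_mk.mpr (by omega))
  · intro i j hij
    have hsum : (i : ℕ) + j = 2 * n - 1 := by
      simp only [nestedMatching, fromRel_adj] at hij
      omega
    wlog hi : (i : ℕ) < n generalizing i j
    · exact (this j i hij.symm (by omega) (by omega)).symm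
    have hj : ¬ (j : ℕ) < n := by omega
    have hj' : 2 * n - 1 - (j : ℕ) = i := by omega
    simp only [hi, hj, hj', dite_true, dite_false]
    exact hadj _

theorem SimpleGraph.adj_inf_sup_of_mem_edgeSet {α : Type*} [LinearOrder α] {G : SimpleGraph α}
    {e : Sym2 α} (he : e ∈ G.edgeSet) : G.Adj e.inf e.sup := by
  induction e with | _ a b
  rcases le_total a b with h | h
  · simpa [h] using he
  · simpa [h] using he.symm

theorem SimpleGraph.inf_lt_sup_of_mem_edgeSet {α : Type*} [LinearOrder α] {G : SimpleGraph α}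
    {e : Sym2 α} (he : e ∈ G.edgeSet) : e.inf < e.sup :=
  (Sym2.inf_le_sup e).lt_of_ne (G.adj_inf_sup_of_mem_edgeSet he).ne

def endpointSum (e : Sym2 (Fin N)) : ℕ := (e.inf : ℕ) + e.sup

theorem eq_of_endpointSum_eq_of_inf_eq {e f : Sym2 (Fin N)} (hs : endpointSum e = endpointSum f)
    (hinf : e.inf = f.inf) : e = f := by
  refine Sym2.inf_eq_inf_and_sup_eq_sup.mp ⟨hinf, Fin.ext ?_⟩
  unfold endpointSum at hs
  rw [hinf] at hs
  omega

theorem eq_of_endpointSum_eq_of_sup_eq {e f : Sym2 (Fin N)} (hs : endpointSum e = endpointSum f)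
    (hsup : e.sup = f.sup) : e = f := by
  refine eq_of_endpointSum_eq_of_inf_eq hs (Fin.ext ?_)
  unfold endpointSum at hs
  rw [hsup] at hs
  omega

section NestRank

variable {G : SimpleGraph (Fin N)} [DecidableRel G.Adj]

/-- Edges with a common endpoint sum are pairwise nested. -/
theorem card_filter_endpointSum_lt (hNM : ¬ OrderedSubgraph (nestedMatching n) G) (s : ℕ) :
    #{e ∈ G.edgeFinset | endpointSum e = s} < n := by
  set C := {e ∈ G.edgeFinset | endpointSum e = s}
  by_contra! hC
  have hinj : Set.InjOn Sym2.inf (C : Set (Sym2 (Fin N))) := fun e he f hf h =>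
    eq_of_endpointSum_eq_of_inf_eq (((mem_filter.mp he).2).trans (mem_filter.mp hf).2.symm) h
  obtain ⟨t, ht, htcard⟩ := exists_subset_card_eq (hC.trans (card_image_of_injOn hinj).ge)
  have hmem : ∀ i, ∃ f ∈ C, f.inf = t.orderEmbOfFin htcard i := fun i =>
    mem_image.mp (ht (t.orderEmbOfFin_mem htcard i))
  choose f hfC hf using hmem
  have hfE : ∀ i, f i ∈ G.edgeSet := fun i => mem_edgeFinset.mp (mem_filter.mp (hfC i)).1
  have hfs : ∀ i, ((f i).inf : ℕ) + (f i).sup = s := fun i => (mem_filter.mp (hfC i)).2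
  have hmono : StrictMono fun i => (f i).inf := by
    simpa only [hf] using (t.orderEmbOfFin htcard).strictMono
  refine hNM (orderedSubgraph_nestedMatching hmono (fun i j hij => ?_)
    (fun i => G.inf_lt_sup_of_mem_edgeSet (hfE i)) (fun i => G.adj_inf_sup_of_mem_edgeSet (hfE i)))
  have hinf : ((f i).inf : ℕ) < (f j).inf := hmono hij
  have := hfs i
  have := hfs j
  rw [Fin.lt_def]
  omega

variable (G) in
def nestRank (e : Sym2 (Fin N)) : ℕ :=
  #{f ∈ G.edgeFinset | endpointSum f = endpointSum e ∧ f.inf ≤ e.inf}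

theorem one_le_nestRank {e : Sym2 (Fin N)} (he : e ∈ G.edgeFinset) : 1 ≤ nestRank G e :=
  card_pos.mpr ⟨e, mem_filter.mpr ⟨he, rfl, le_rfl⟩⟩

theorem nestRank_lt (hNM : ¬ OrderedSubgraph (nestedMatching n) G) (e : Sym2 (Fin N)) :
    nestRank G e < n := by
  refine (card_le_card fun f hf => ?_).trans_lt (card_filter_endpointSum_lt hNM (endpointSum e))
  obtain ⟨hfE, hfs, -⟩ := mem_filter.mp hf
  exact mem_filter.mpr ⟨hfE, hfs⟩

theorem nestRank_le_inf (e : Sym2 (Fin N)) : nestRank G e ≤ e.inf + 1 := by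
  rw [← Fin.card_Iic]
  refine card_le_card_of_injOn Sym2.inf (fun f hf => mem_Iic.mpr (mem_filter.mp hf).2.2) ?_
  intro f hf g hg
  exact eq_of_endpointSum_eq_of_inf_eq ((mem_filter.mp hf).2.1.trans (mem_filter.mp hg).2.1.symm)

theorem nestRank_add_sup_le (e : Sym2 (Fin N)) : nestRank G e + e.sup ≤ N := by
  suffices nestRank G e ≤ #(Ici e.sup) by rw [Fin.card_Ici] at this; omega
  refine card_le_card_of_injOn Sym2.sup (fun f hf => mem_Ici.mpr ?_) ?_
  · obtain ⟨-, hs, hinf⟩ := mem_filter.mp hf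
    unfold endpointSum at hs
    rw [Fin.le_def] at hinf ⊢
    omega
  · intro f hf g hg
    exact eq_of_endpointSum_eq_of_sup_eq ((mem_filter.mp hf).2.1.trans (mem_filter.mp hg).2.1.symm)

theorem nestRank_lt_nestRank {e f : Sym2 (Fin N)} (hf : f ∈ G.edgeFinset)
    (hs : endpointSum e = endpointSum f) (hinf : e.inf < f.inf) : nestRank G e < nestRank G f := by
  have hsub : {g ∈ G.edgeFinset | endpointSum g = endpointSum e ∧ g.inf ≤ e.inf} ⊆
      {g ∈ G.edgeFinset | endpointSum g = endpointSum f ∧ g.inf ≤ f.inf} := by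
    intro g hg
    obtain ⟨hgE, hgs, hg⟩ := mem_filter.mp hg
    exact mem_filter.mpr ⟨hgE, hgs.trans hs, hg.trans hinf.le⟩
  refine card_lt_card ((ssubset_iff_of_subset hsub).mpr ⟨f, ?_, fun h => ?_⟩)
  · exact mem_filter.mpr ⟨hf, rfl, le_rfl⟩
  · exact (mem_filter.mp h).2.2.not_gt hinf

theorem injOn_endpointSum_of_nestRank_eq (r : ℕ) :
    Set.InjOn endpointSum
      (({e ∈ G.edgeFinset | nestRank G e = r} : Finset _) : Set (Sym2 (Fin N))) := by
  intro e he f hf hs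
  obtain ⟨heE, her⟩ := mem_filter.mp he
  obtain ⟨hfE, hfr⟩ := mem_filter.mp hf
  refine eq_of_endpointSum_eq_of_inf_eq hs ?_
  rcases lt_trichotomy e.inf f.inf with h | h | h
  · exact absurd (nestRank_lt_nestRank hfE hs h) (by omega)
  · exact h
  · exact absurd (nestRank_lt_nestRank heE hs.symm h) (by omega)

theorem card_filter_nestRank_eq_le (r : ℕ) :
    #{e ∈ G.edgeFinset | nestRank G e = r} ≤ #(Icc (2 * r - 1) (2 * N - 2 * r - 1)) := by
  refine card_le_card_of_injOn endpointSum (fun e he => ?_) (injOn_endpointSum_of_nestRank_eq r)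
  obtain ⟨heE, rfl⟩ := mem_filter.mp he
  have hlt : (e.inf : ℕ) < e.sup := G.inf_lt_sup_of_mem_edgeSet (mem_edgeFinset.mp heE)
  have := nestRank_le_inf (G := G) e
  have := nestRank_add_sup_le (G := G) e
  rw [coe_Icc, Set.mem_Icc, endpointSum]
  omega

theorem card_edgeFinset_le_sum (hNM : ¬ OrderedSubgraph (nestedMatching n) G) :
    #G.edgeFinset ≤ ∑ r ∈ Icc 1 (n - 1), #(Icc (2 * r - 1) (2 * N - 2 * r - 1)) := by
  have hrank : ∀ e ∈ G.edgeFinset, nestRank G e ∈ Icc 1 (n - 1) := fun e he =>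
    mem_Icc.mpr ⟨one_le_nestRank he, Nat.le_sub_one_of_lt (nestRank_lt hNM e)⟩
  rw [card_eq_sum_card_fiberwise hrank]
  exact sum_le_sum fun r _ => card_filter_nestRank_eq_le r

end NestRank

theorem sum_card_Icc_add (N : ℕ) {m : ℕ} (hm : 2 * m ≤ N) :
    ∑ r ∈ Icc 1 m, #(Icc (2 * r - 1) (2 * N - 2 * r - 1)) + 2 * m * (m + 1) =
      m * (2 * N + 1) := by
  induction m with
  | zero => simp
  | succ m ih =>
    rw [sum_Icc_succ_top (by omega), Nat.card_Icc]
    have hterm : 2 * N - 2 * (m + 1) - 1 + 1 - (2 * (m + 1) - 1) + 4 * (m + 1) = 2 * N + 1 := by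
      omega
    linarith [ih (by omega)]

theorem SimpleGraph.two_mul_card_edgeFinset_add_card_edgeFinset_compl {V : Type*} [Fintype V]
    [DecidableEq V] (G : SimpleGraph V) [DecidableRel G.Adj] :
    2 * (#G.edgeFinset + #Gᶜ.edgeFinset) = Fintype.card V * (Fintype.card V - 1) := by
  rw [mul_add, ← sum_degrees_eq_twice_card_edges, ← sum_degrees_eq_twice_card_edges,
    ← sum_add_distrib]
  have hdeg : ∀ v, G.degree v + Gᶜ.degree v = Fintype.card V - 1 := fun v => by
    have := G.degree_lt_card_verts v
    rw [degree_compl]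
    omega
  simp [hdeg]

section Coloring

variable {G : SimpleGraph (Fin N)} [DecidableRel G.Adj]

theorem card_edgeFinset_add_le (hNM : ¬ OrderedSubgraph (nestedMatching n) G)
    (hN : 2 * (n - 1) ≤ N) : #G.edgeFinset + 2 * (n - 1) * n ≤ (n - 1) * (2 * N + 1) := by
  have := sum_card_Icc_add N hN
  have := card_edgeFinset_le_sum hNM
  rcases Nat.eq_zero_or_pos n with rfl | hn
  · simp_all
  · rw [Nat.sub_add_cancel hn] at *
    omega

theorem degree_compl_lt (hNM : ¬ OrderedSubgraph (nestedMatching n) G)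
    (hK : ¬ OrderedSubgraph (⊤ : SimpleGraph (Fin 3)) Gᶜ) (v : Fin N) :
    Gᶜ.degree v < 2 * n := by
  by_contra! h
  obtain ⟨t, ht, htcard⟩ := exists_subset_card_eq h
  have hclique : G.IsClique (t : Set (Fin N)) := by
    have := isIndepSet_neighborSet_of_triangleFree _ (cliqueFree_of_not_orderedSubgraph_top hK) v
    rw [← isClique_compl, compl_compl] at this
    exact this.subset fun x hx => (mem_neighborFinset _ _ _).mp (ht hx)
  have hK2n : OrderedSubgraph (⊤ : SimpleGraph (Fin (2 * n))) G :=
    (⟨hclique, htcard⟩ : G.IsNClique (2 * n) t).orderedSubgraph_top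
  exact hNM (hK2n.of_le le_top)

theorem card_mul_pred_add_le (hNM : ¬ OrderedSubgraph (nestedMatching n) G)
    (hK : ¬ OrderedSubgraph (⊤ : SimpleGraph (Fin 3)) Gᶜ) (hN : 2 * (n - 1) ≤ N) :
    N * (N - 1) + 4 * (n - 1) * n ≤ 2 * (n - 1) * (2 * N + 1) + N * (2 * n - 1) := by
  have htotal := G.two_mul_card_edgeFinset_add_card_edgeFinset_compl
  rw [Fintype.card_fin] at htotal
  have hred := card_edgeFinset_add_le hNM hN
  have hblue : 2 * #Gᶜ.edgeFinset ≤ N * (2 * n - 1) := by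
    rw [← sum_degrees_eq_twice_card_edges]
    calc ∑ v, Gᶜ.degree v ≤ ∑ _v : Fin N, (2 * n - 1) :=
          sum_le_sum fun v _ => Nat.le_sub_one_of_lt (degree_compl_lt hNM hK v)
      _ = N * (2 * n - 1) := by simp
  linarith

end Coloring

theorem orderedSubgraph_nestedMatching_or_top (hn : 1 ≤ n)
    (R : SimpleGraph (Fin (3 * n + Nat.sqrt (5 * n ^ 2) + 1))) :
    OrderedSubgraph (nestedMatching n) R ∨ OrderedSubgraph (⊤ : SimpleGraph (Fin 3)) Rᶜ := by
  classical
  by_contra! h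
  have hineq := card_mul_pred_add_le h.1 h.2 (by omega)
  have hsqrt := Nat.lt_succ_sqrt' (5 * n ^ 2)
  generalize Nat.sqrt (5 * n ^ 2) = m at hineq hsqrt
  obtain ⟨k, rfl⟩ := Nat.exists_eq_add_of_le' hn
  rw [show 3 * (k + 1) + m + 1 - 1 = 3 * (k + 1) + m by omega,
    show k + 1 - 1 = k by omega, show 2 * (k + 1) - 1 = 2 * k + 1 by omega] at hineq
  nlinarith

/-- For every positive integer `n`,
`r_<(NM_n, K_3) ≤ (3 + √5) n + 1`. -/
theorem stmt_0 (n : ℕ) (hn : 1 ≤ n) :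
    (orderedRamsey (nestedMatching n) (⊤ : SimpleGraph (Fin 3)) : ℝ) ≤
      (3 + Real.sqrt 5) * n + 1 := by
  have hle : orderedRamsey (nestedMatching n) (⊤ : SimpleGraph (Fin 3)) ≤
      3 * n + Nat.sqrt (5 * n ^ 2) + 1 :=
    Nat.sInf_le (orderedSubgraph_nestedMatching_or_top hn)
  have hsqrt : (Nat.sqrt (5 * n ^ 2) : ℝ) ≤ Real.sqrt 5 * n :=
    calc (Nat.sqrt (5 * n ^ 2) : ℝ)
        ≤ Real.sqrt ((5 * n ^ 2 : ℕ) : ℝ) := Real.nat_sqrt_le_real_sqrt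
      _ = Real.sqrt 5 * n := by
        push_cast
        rw [Real.sqrt_mul' _ (by positivity), Real.sqrt_sq (by positivity)]
  calc (orderedRamsey (nestedMatching n) (⊤ : SimpleGraph (Fin 3)) : ℝ)
      ≤ ((3 * n + Nat.sqrt (5 * n ^ 2) + 1 : ℕ) : ℝ) := by exact_mod_cast hle
    _ ≤ (3 + Real.sqrt 5) * n + 1 := by push_cast; linarith
end

section
/- For every integer k ≥ 3, there exists a k-queue graph (an ordered graph containing no copy of the nested matching NM_{k+1} as an ordered subgraph) whose chromatic number is at least 2k + 2. -/
/-!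
Start from a 22-vertex ordered graph whose edges are split into three queues (nested edges
lie in different queues) and in which every four vertices span an edge. It has no four
pairwise nested edges, and each colour class has at most three vertices, so it needs at least
⌈22/3⌉ = 8 colours. Adding one vertex before and one after all others, both adjacent to every
other vertex, costs two new colours, while in a family of pairwise nested edges of the new
graph all but the outermost edge avoid the two new vertices and so come from the old graph.
Iterating `k - 3` times gives a `k`-queue graph with chromatic number at least `2k + 2`.
-/
open SimpleGraph Finset

namespace SimpleGraph

variable {V : Type*} {G : SimpleGraph V}

theorem Coloring.colorable_card_of_forall_mem {α : Type*} (C : G.Coloring α) (s : Finset α)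
    (hs : ∀ v, C v ∈ s) : G.Colorable #s := by
  simpa using (Coloring.mk (fun v ↦ (⟨C v, hs v⟩ : s))
    fun hvw heq ↦ C.valid hvw (congrArg Subtype.val heq)).colorable

theorem card_le_mul_of_indepSetFree_of_colorable [Fintype V] {a m : ℕ}
    (hG : G.IndepSetFree (a + 1)) (hc : G.Colorable m) : Fintype.card V ≤ a * m := by
  classical
  obtain ⟨C⟩ := hc
  have hclass : ∀ c, #{v | C v = c} ≤ a := by
    intro c
    by_contra! hlarge
    obtain ⟨t, hts, htcard⟩ := exists_subset_card_eq (Nat.succ_le_of_lt hlarge)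
    refine hG t ⟨fun v hv w hw _ ↦ C.not_adj_of_mem_colorClass (c := c) ?_ ?_, htcard⟩
    · exact (mem_filter.mp (hts hv)).2
    · exact (mem_filter.mp (hts hw)).2
  simpa using card_le_mul_card_image_of_maps_to (s := univ) (t := univ)
    (fun v _ ↦ mem_univ (C v)) a fun c _ ↦ hclass c

end SimpleGraph

def HasNestedEdges {N : ℕ} (G : SimpleGraph (Fin N)) (t : ℕ) : Prop :=
  ∃ f g : Fin t → Fin N,
    StrictMono f ∧ StrictAnti g ∧ ∀ l, f l < g l ∧ G.Adj (f l) (g l)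

theorem OrderedSubgraph.hasNestedEdges {n N : ℕ} {G : SimpleGraph (Fin N)}
    (h : OrderedSubgraph (nestedMatching n) G) : HasNestedEdges G n := by
  obtain ⟨φ, hφ, hadj⟩ := h
  refine ⟨fun l ↦ φ ⟨l, by omega⟩, fun l ↦ φ ⟨2 * n - 1 - l, by omega⟩,
    fun l l' h ↦ hφ (Fin.mk_lt_mk.mpr h), fun l l' h ↦ hφ (Fin.mk_lt_mk.mpr ?_),
    fun l ↦ ⟨hφ (Fin.mk_lt_mk.mpr ?_), hadj _ _ ?_⟩⟩
  · have := l'.isLt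
    rw [Fin.lt_def] at h
    omega
  · omega
  · simp only [nestedMatching, fromRel_adj, ne_eq, Fin.mk.injEq]
    omega

theorem not_hasNestedEdges_of_queueAssignment {N k : ℕ} {G : SimpleGraph (Fin N)}
    (q : Fin N → Fin N → Fin k)
    (hq : ∀ i a b j, i < a → a < b → b < j → G.Adj i j → G.Adj a b → q i j ≠ q a b) :
    ¬ HasNestedEdges G (k + 1) := by
  rintro ⟨f, g, hf, hg, hfg⟩
  have hnested : ∀ l l', l < l' → q (f l) (g l) ≠ q (f l') (g l') := fun l l' h ↦
    hq _ _ _ _ (hf h) (hfg l').1 (hg h) (hfg l).2 (hfg l').2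
  have hinj : Function.Injective fun l ↦ q (f l) (g l) := by
    intro l l' heq
    by_contra hne
    rcases lt_or_gt_of_ne hne with h | h
    · exact hnested l l' h heq
    · exact hnested l' l h heq.symm
  simpa using Fin.le_of_injective _ hinj

def Fin.interiorEmb (N : ℕ) : Fin N ↪o Fin (N + 2) :=
  Fin.castSuccOrderEmb.trans (Fin.succOrderEmb (N + 1))

def addUniversalEnds {N : ℕ} (G : SimpleGraph (Fin N)) : SimpleGraph (Fin (N + 2)) :=
  G.map (Fin.interiorEmb N) ⊔ fromRel fun x _ ↦ x = 0 ∨ x = Fin.last (N + 1)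

section addUniversalEnds

variable {N : ℕ} {G : SimpleGraph (Fin N)}

theorem Fin.interiorEmb_ne_zero (v : Fin N) : Fin.interiorEmb N v ≠ 0 :=
  Fin.succ_ne_zero _

theorem Fin.interiorEmb_ne_last (v : Fin N) : Fin.interiorEmb N v ≠ Fin.last (N + 1) :=
  fun h ↦ (Fin.castSucc_lt_last v).ne (Fin.succ_injective _ h)

theorem addUniversalEnds_adj_of_end {x y : Fin (N + 2)} (hxy : x ≠ y)
    (hy : y = 0 ∨ y = Fin.last (N + 1)) : (addUniversalEnds G).Adj x y :=
  Or.inr ⟨hxy, Or.inr hy⟩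

theorem addUniversalEnds_adj_zero_last : (addUniversalEnds G).Adj 0 (Fin.last (N + 1)) :=
  addUniversalEnds_adj_of_end Fin.last_pos.ne (Or.inr rfl)

theorem addUniversalEnds_adj_interiorEmb {a b : Fin N} (h : G.Adj a b) :
    (addUniversalEnds G).Adj (Fin.interiorEmb N a) (Fin.interiorEmb N b) :=
  Or.inl ⟨(Fin.interiorEmb N).injective.ne h.ne, a, b, h, rfl, rfl⟩

theorem exists_adj_of_addUniversalEnds_adj {x y : Fin (N + 2)}
    (hxy : (addUniversalEnds G).Adj x y) (hx : 0 < x) (hlt : x < y) (hy : y < Fin.last (N + 1)) :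
    ∃ a b, G.Adj a b ∧ Fin.interiorEmb N a = x ∧ Fin.interiorEmb N b = y := by
  rcases hxy with ⟨-, a, b, hab, rfl, rfl⟩ | ⟨-, h | h⟩
  · exact ⟨a, b, hab, rfl, rfl⟩
  · rcases h with rfl | rfl
    · exact absurd hx (lt_irrefl _)
    · exact absurd hlt (Fin.le_last y).not_gt
  · rcases h with rfl | rfl
    · exact absurd hlt (Fin.not_lt_zero x)
    · exact absurd hy (lt_irrefl _)

theorem SimpleGraph.Colorable.of_addUniversalEnds {m : ℕ}
    (h : (addUniversalEnds G).Colorable (m + 2)) : G.Colorable m := by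
  classical
  obtain ⟨C⟩ := h
  let ι : G →g addUniversalEnds G := ⟨Fin.interiorEmb N, addUniversalEnds_adj_interiorEmb⟩
  have hends : C 0 ≠ C (Fin.last (N + 1)) := C.valid addUniversalEnds_adj_zero_last
  have hmem : ∀ v, (C.comp ι) v ∈ univ \ {C 0, C (Fin.last (N + 1))} := by
    intro v
    simp only [mem_sdiff, mem_univ, mem_insert, mem_singleton, not_or, true_and]
    exact ⟨C.valid (addUniversalEnds_adj_of_end (Fin.interiorEmb_ne_zero v) (Or.inl rfl)),
      C.valid (addUniversalEnds_adj_of_end (Fin.interiorEmb_ne_last v) (Or.inr rfl))⟩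
  simpa [card_sdiff, card_pair hends] using Coloring.colorable_card_of_forall_mem _ _ hmem

theorem le_chromaticNumber_addUniversalEnds {n : ℕ} (h : n ≤ G.chromaticNumber) :
    ((n + 2 : ℕ) : ℕ∞) ≤ (addUniversalEnds G).chromaticNumber := by
  rw [le_chromaticNumber_iff_colorable] at h ⊢
  intro m hm
  have h2 : (2 : ℕ∞) ≤ m :=
    (two_le_chromaticNumber_of_adj addUniversalEnds_adj_zero_last).trans hm.chromaticNumber_le
  obtain ⟨m, rfl⟩ : ∃ m', m = m' + 2 := ⟨m - 2, by norm_cast at h2; omega⟩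
  simpa using h m hm.of_addUniversalEnds

theorem not_hasNestedEdges_addUniversalEnds {t : ℕ} (h : ¬ HasNestedEdges G t) :
    ¬ HasNestedEdges (addUniversalEnds G) (t + 1) := by
  rintro ⟨f, g, hf, hg, hfg⟩
  have hinner : ∀ l : Fin t, ∃ a b, G.Adj a b ∧
      Fin.interiorEmb N a = f l.succ ∧ Fin.interiorEmb N b = g l.succ := fun l ↦
    exists_adj_of_addUniversalEnds_adj (hfg l.succ).2 ((Fin.zero_le _).trans_lt (hf l.succ_pos))
      (hfg l.succ).1 ((hg l.succ_pos).trans_le (Fin.le_last _))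
  choose a b hab ha hb using hinner
  refine h ⟨a, b, fun l l' hl ↦ ?_, fun l l' hl ↦ ?_, fun l ↦ ⟨?_, hab l⟩⟩
  · simpa [← (Fin.interiorEmb N).lt_iff_lt, ha] using hf (Fin.succ_lt_succ_iff.mpr hl)
  · simpa [← (Fin.interiorEmb N).lt_iff_lt, hb] using hg (Fin.succ_lt_succ_iff.mpr hl)
  · simpa [← (Fin.interiorEmb N).lt_iff_lt, ha, hb] using (hfg l.succ).1

end addUniversalEnds

-- Entry `(a, b)` is `0` if `ab` is not an edge, and otherwise the queue (`1`, `2` or `3`)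
-- of the edge `ab`.
def baseLabels : List (List ℕ) :=
  [[0, 2, 1, 3, 1, 1, 1, 1, 1, 1, 0, 0, 0, 0, 0, 0, 0, 0, 0, 0, 0, 0],
   [2, 0, 2, 3, 3, 3, 0, 0, 0, 1, 1, 1, 1, 1, 0, 0, 0, 0, 0, 0, 0, 0],
   [1, 2, 0, 2, 2, 3, 3, 3, 3, 0, 0, 0, 0, 1, 0, 0, 0, 0, 0, 0, 0, 0],
   [3, 3, 2, 0, 2, 2, 0, 0, 3, 3, 3, 0, 0, 0, 0, 0, 0, 0, 0, 0, 0, 0],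
   [1, 3, 2, 2, 0, 2, 2, 0, 0, 0, 3, 3, 0, 1, 0, 0, 0, 0, 0, 0, 0, 0],
   [1, 3, 3, 2, 2, 0, 2, 2, 0, 0, 0, 3, 0, 1, 0, 0, 0, 0, 0, 0, 0, 0],
   [1, 0, 3, 0, 2, 2, 0, 2, 2, 0, 0, 3, 0, 1, 1, 1, 1, 0, 0, 0, 0, 0],
   [1, 0, 3, 0, 0, 2, 2, 0, 2, 2, 0, 3, 3, 3, 3, 0, 1, 0, 0, 0, 0, 0],
   [1, 0, 3, 3, 0, 0, 2, 2, 0, 2, 2, 0, 0, 0, 3, 0, 1, 0, 0, 0, 0, 0],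
   [1, 1, 0, 3, 0, 0, 0, 2, 2, 0, 2, 2, 0, 0, 3, 0, 1, 0, 0, 0, 0, 0],
   [0, 1, 0, 3, 3, 0, 0, 0, 2, 2, 0, 2, 0, 2, 3, 0, 1, 0, 0, 0, 0, 0],
   [0, 1, 0, 0, 3, 3, 3, 3, 0, 2, 2, 0, 0, 2, 2, 0, 1, 0, 0, 0, 0, 0],
   [0, 1, 0, 0, 0, 0, 0, 3, 0, 0, 0, 0, 0, 0, 3, 3, 0, 3, 1, 3, 3, 3],
   [0, 1, 1, 0, 1, 1, 1, 3, 0, 0, 2, 2, 0, 0, 2, 2, 2, 0, 0, 0, 0, 0],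
   [0, 0, 0, 0, 0, 0, 1, 3, 3, 3, 3, 2, 3, 2, 0, 0, 2, 2, 0, 0, 0, 0],
   [0, 0, 0, 0, 0, 0, 1, 0, 0, 0, 0, 0, 3, 2, 0, 0, 0, 2, 1, 2, 2, 3],
   [0, 0, 0, 0, 0, 0, 1, 1, 1, 1, 1, 1, 0, 2, 2, 0, 0, 0, 1, 0, 2, 0],
   [0, 0, 0, 0, 0, 0, 0, 0, 0, 0, 0, 0, 3, 0, 2, 2, 0, 0, 1, 1, 2, 2],
   [0, 0, 0, 0, 0, 0, 0, 0, 0, 0, 0, 0, 1, 0, 0, 1, 1, 1, 0, 1, 1, 2],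
   [0, 0, 0, 0, 0, 0, 0, 0, 0, 0, 0, 0, 3, 0, 0, 2, 0, 1, 1, 0, 1, 3],
   [0, 0, 0, 0, 0, 0, 0, 0, 0, 0, 0, 0, 3, 0, 0, 2, 2, 2, 1, 1, 0, 1],
   [0, 0, 0, 0, 0, 0, 0, 0, 0, 0, 0, 0, 3, 0, 0, 3, 0, 2, 2, 3, 1, 0]]

def baseLabel (a b : ℕ) : ℕ := (baseLabels.getD a []).getD b 0

theorem baseLabel_symm_and_lt_four :
    ∀ a < 22, ∀ b < 22, baseLabel a b = baseLabel b a ∧ baseLabel a b < 4 := by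
  decide

set_option synthInstance.maxSize 1000 in
theorem baseLabel_ne_zero_of_four :
    ∀ d < 22, ∀ c < d, ∀ b < c, ∀ a < b,
      baseLabel a b ≠ 0 ∨ baseLabel a c ≠ 0 ∨ baseLabel a d ≠ 0 ∨
        baseLabel b c ≠ 0 ∨ baseLabel b d ≠ 0 ∨ baseLabel c d ≠ 0 := by
  decide

set_option synthInstance.maxSize 1000 in
theorem baseLabel_nested_ne :
    ∀ j < 22, ∀ b < j, ∀ a < b, ∀ i < a,
      baseLabel i j = 0 ∨ baseLabel a b = 0 ∨ baseLabel i j ≠ baseLabel a b := by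
  decide

def baseGraph : SimpleGraph (Fin 22) where
  Adj a b := a ≠ b ∧ baseLabel a b ≠ 0
  symm := ⟨fun a b h ↦
    ⟨h.1.symm, (baseLabel_symm_and_lt_four a a.isLt b b.isLt).1 ▸ h.2⟩⟩
  loopless := ⟨fun _ h ↦ h.1 rfl⟩

theorem baseGraph_adj {a b : Fin 22} : baseGraph.Adj a b ↔ a ≠ b ∧ baseLabel a b ≠ 0 :=
  Iff.rfl

theorem baseGraph_adj_of_lt {a b : Fin 22} (hab : a < b) (h : baseLabel a b ≠ 0) :
    baseGraph.Adj a b :=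
  baseGraph_adj.mpr ⟨hab.ne, h⟩

theorem baseGraph_indepSetFree : baseGraph.IndepSetFree 4 := by
  intro t ht
  let e := t.orderEmbOfFin ht.card_eq
  have hnadj : ∀ i j : Fin 4, i < j → baseLabel (e i) (e j) = 0 := fun i j hij ↦ by
    by_contra hne
    exact ht.isIndepSet (t.orderEmbOfFin_mem _ i) (t.orderEmbOfFin_mem _ j)
      (e.injective.ne hij.ne) (baseGraph_adj_of_lt (e.strictMono hij) hne)
  rcases baseLabel_ne_zero_of_four (e 3) (e 3).isLt (e 2) (e.strictMono (by decide))
      (e 1) (e.strictMono (by decide)) (e 0) (e.strictMono (by decide))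
    with h | h | h | h | h | h
  all_goals exact h (hnadj _ _ (by decide))

theorem le_chromaticNumber_baseGraph : ((8 : ℕ) : ℕ∞) ≤ baseGraph.chromaticNumber := by
  rw [le_chromaticNumber_iff_colorable]
  intro m hm
  have := card_le_mul_of_indepSetFree_of_colorable baseGraph_indepSetFree hm
  simp only [Fintype.card_fin] at this
  exact_mod_cast (by omega : 8 ≤ m)

theorem not_hasNestedEdges_baseGraph : ¬ HasNestedEdges baseGraph 4 := by
  have hlt (a b : Fin 22) : baseLabel a b - 1 < 3 := by
    have := (baseLabel_symm_and_lt_four a a.isLt b b.isLt).2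
    omega
  refine not_hasNestedEdges_of_queueAssignment (fun a b ↦ ⟨baseLabel a b - 1, hlt a b⟩)
    fun i a b j hia hab hbj hij hab' heq ↦ ?_
  have hij0 := (baseGraph_adj.mp hij).2
  have hab0 := (baseGraph_adj.mp hab').2
  rcases baseLabel_nested_ne j j.isLt b hbj a hab i hia with h | h | h
  · exact hij0 h
  · exact hab0 h
  · exact h (by simp only [Fin.mk.injEq] at heq; omega)

/-- For every `k ≥ 3`, there is a `k`-queue graph (an ordered graph with
no ordered-subgraph copy of `NM_{k+1}`) whose chromatic number is at least `2k + 2`. -/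
theorem stmt_4 (k : ℕ) (hk : 3 ≤ k) :
    ∃ (N : ℕ) (G : SimpleGraph (Fin N)),
      ¬ OrderedSubgraph (nestedMatching (k + 1)) G ∧
      (2 * k + 2 : ℕ∞) ≤ G.chromaticNumber := by
  suffices ∃ (N : ℕ) (G : SimpleGraph (Fin N)),
      ¬ HasNestedEdges G (k + 1) ∧ ((2 * k + 2 : ℕ) : ℕ∞) ≤ G.chromaticNumber by
    obtain ⟨N, G, hG, hχ⟩ := this
    exact ⟨N, G, fun h ↦ hG h.hasNestedEdges, by exact_mod_cast hχ⟩
  induction k, hk using Nat.le_induction with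
  | base => exact ⟨22, baseGraph, not_hasNestedEdges_baseGraph, le_chromaticNumber_baseGraph⟩
  | succ k _ ih =>
    obtain ⟨N, G, hG, hχ⟩ := ih
    exact ⟨N + 2, addUniversalEnds G, not_hasNestedEdges_addUniversalEnds hG,
      le_chromaticNumber_addUniversalEnds hχ⟩
end

section
/- For every positive integer n, the ordered Ramsey number of the nested matching NM_2 versus the complete ordered graph on n vertices satisfies r_<(NM_2, K_n) = 3n − 2. -/
/-!
Level the vertices of a red graph by the largest number of red edges between consecutive
vertices of an increasing sequence ending there. A red edge `uv` with `u < v` raises the level,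
and if no red edge is nested inside it, by at most two; so without a red `NM_2` every residue
class of levels mod 3 is blue, and one of them holds `n` of the `3n - 2` vertices. Conversely,
`n - 1` consecutive red triangles contain no red `NM_2` (its outer edge spans four vertices) and
no blue `K_n`.
-/

/-- `N → (G, H)` in the ordered setting; `orderedRamsey G H` is the least such `N`. -/
def OrderedArrows (N : ℕ) {m k : ℕ} (G : SimpleGraph (Fin m)) (H : SimpleGraph (Fin k)) : Prop :=
  ∀ R : SimpleGraph (Fin N), OrderedSubgraph G R ∨ OrderedSubgraph H Rᶜ

def blockGraph (k N : ℕ) : SimpleGraph (Fin N) :=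
  SimpleGraph.fromRel fun u v => (u : ℕ) / k = (v : ℕ) / k

open Finset

section OrderedSubgraph

variable {m N : ℕ}

lemma OrderedSubgraph.of_comap {G : SimpleGraph (Fin m)} {H : SimpleGraph (Fin N)} {M : ℕ}
    {f : Fin N → Fin M} (hf : StrictMono f) {H' : SimpleGraph (Fin M)} (hH : H ≤ H'.comap f)
    (h : OrderedSubgraph G H) : OrderedSubgraph G H' := by
  obtain ⟨φ, hφ, hadj⟩ := h
  exact ⟨f ∘ φ, hf.comp hφ, fun i j hij => hH (hadj i j hij)⟩

lemma OrderedArrows.mono {M : ℕ} {G : SimpleGraph (Fin m)} {H : SimpleGraph (Fin N)}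
    (h : OrderedArrows M G H) {M' : ℕ} (hM : M ≤ M') : OrderedArrows M' G H := by
  intro R
  have hf : StrictMono (Fin.castLE hM) := Fin.strictMono_castLE hM
  refine (h (R.comap (Fin.castLE hM))).imp (OrderedSubgraph.of_comap hf le_rfl)
    (OrderedSubgraph.of_comap hf fun x y hxy => ?_)
  rw [SimpleGraph.compl_adj] at hxy
  exact (SimpleGraph.compl_adj _ _ _).2 ⟨hf.injective.ne hxy.1, hxy.2⟩

lemma orderedRamsey_eq_succ {M : ℕ} {G : SimpleGraph (Fin m)} {H : SimpleGraph (Fin N)}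
    (h : OrderedArrows (M + 1) G H) (h' : ¬ OrderedArrows M G H) :
    orderedRamsey G H = M + 1 :=
  (Nat.sInf_upward_closed_eq_succ_iff (fun _ _ hle hk => OrderedArrows.mono hk hle) M).2 ⟨h, h'⟩

lemma orderedSubgraph_top_of_isClique {n : ℕ} {H : SimpleGraph (Fin N)} {s : Finset (Fin N)}
    (hs : H.IsClique (s : Set (Fin N))) (hn : n ≤ s.card) :
    OrderedSubgraph (⊤ : SimpleGraph (Fin n)) H := by
  obtain ⟨t, hts, rfl⟩ := exists_subset_card_eq hn
  refine ⟨t.orderEmbOfFin rfl, (t.orderEmbOfFin rfl).strictMono, fun i j hij => ?_⟩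
  exact hs (hts (t.orderEmbOfFin_mem rfl i)) (hts (t.orderEmbOfFin_mem rfl j))
    ((t.orderEmbOfFin rfl).injective.ne hij)

lemma orderedSubgraph_nestedMatching_two_iff {R : SimpleGraph (Fin N)} :
    OrderedSubgraph (nestedMatching 2) R ↔
      ∃ a b c d : Fin N, a < b ∧ b < c ∧ c < d ∧ R.Adj a d ∧ R.Adj b c := by
  constructor
  · rintro ⟨φ, hφ, hadj⟩
    have adj (i j : Fin (2 * 2)) (h : (i : ℕ) + j = 3) : R.Adj (φ i) (φ j) :=
      hadj i j ((SimpleGraph.fromRel_adj _ _ _).2 ⟨by omega, Or.inl h⟩)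
    exact ⟨φ 0, φ 1, φ 2, φ 3, hφ (by decide), hφ (by decide), hφ (by decide),
      adj 0 3 rfl, adj 1 2 rfl⟩
  · rintro ⟨a, b, c, d, hab, hbc, hcd, had, hbc'⟩
    refine ⟨![a, b, c, d], ?_, ?_⟩
    · refine Fin.strictMono_iff_lt_succ.2 fun i => ?_
      fin_cases i <;> simpa
    · intro i j hij
      simp only [nestedMatching, SimpleGraph.fromRel_adj] at hij
      fin_cases i <;> fin_cases j <;> simp at hij <;> simp [had, had.symm, hbc', hbc'.symm]

end OrderedSubgraph

namespace SimpleGraph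

variable {N : ℕ} (G : SimpleGraph (Fin N)) [DecidableRel G.Adj]

/-- The largest number of edges between consecutive vertices of an increasing sequence
ending at `v`. -/
noncomputable def edgeLevel (v : Fin N) : ℕ :=
  (Iio v).attach.sup fun u => edgeLevel u.1 + if G.Adj u.1 v then 1 else 0
termination_by (v : ℕ)
decreasing_by exact Fin.lt_def.mp (mem_Iio.mp u.2)

variable {G}

lemma edgeLevel_le {v : Fin N} {k : ℕ}
    (h : ∀ u < v, G.edgeLevel u + (if G.Adj u v then 1 else 0) ≤ k) : G.edgeLevel v ≤ k := by
  rw [edgeLevel]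
  exact Finset.sup_le fun u _ => h u.1 (mem_Iio.mp u.2)

lemma le_edgeLevel {u v : Fin N} (huv : u < v) :
    G.edgeLevel u + (if G.Adj u v then 1 else 0) ≤ G.edgeLevel v := by
  rw [edgeLevel.eq_1 G v]
  exact Finset.le_sup (f := fun u : Iio v => G.edgeLevel u.1 + if G.Adj u.1 v then 1 else 0)
    (mem_attach _ ⟨u, mem_Iio.mpr huv⟩)

lemma edgeLevel_mono : Monotone G.edgeLevel := fun _ _ huv =>
  huv.eq_or_lt.elim (fun h => h ▸ le_rfl) fun h => (Nat.le_add_right _ _).trans (le_edgeLevel h)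

lemma edgeLevel_lt_of_adj {u v : Fin N} (huv : u < v) (hadj : G.Adj u v) :
    G.edgeLevel u < G.edgeLevel v := by
  simpa [hadj] using le_edgeLevel (G := G) huv

lemma edgeLevel_le_succ_of_forall_not_adj {u v : Fin N}
    (hno : ∀ x y, u < x → x < y → y < v → ¬ G.Adj x y) :
    ∀ w, u ≤ w → w < v → G.edgeLevel w ≤ G.edgeLevel u + 1 := by
  intro w
  induction w using WellFoundedLT.induction with
  | _ w ih =>
    intro huw hwv
    refine edgeLevel_le fun x hxw => ?_
    rcases le_or_gt x u with hxu | hxu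
    · have := edgeLevel_mono (G := G) hxu
      split_ifs <;> omega
    · simpa [hno x w hxu hxw hwv] using ih x hxw hxu.le (hxw.trans hwv)

lemma edgeLevel_le_add_two {u v : Fin N}
    (hno : ∀ x y, u < x → x < y → y < v → ¬ G.Adj x y) :
    G.edgeLevel v ≤ G.edgeLevel u + 2 := by
  refine edgeLevel_le fun x hxv => ?_
  have : G.edgeLevel x ≤ G.edgeLevel u + 1 := by
    rcases le_or_gt x u with hxu | hxu
    · exact (edgeLevel_mono hxu).trans (Nat.le_succ _)
    · exact edgeLevel_le_succ_of_forall_not_adj hno x hxu.le hxv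
  split_ifs <;> omega

lemma edgeLevel_mod_three_ne_of_adj
    (hno : ∀ a b c d : Fin N, a < b → b < c → c < d → G.Adj a d → ¬ G.Adj b c)
    {u v : Fin N} (hadj : G.Adj u v) : G.edgeLevel u % 3 ≠ G.edgeLevel v % 3 := by
  wlog huv : u < v generalizing u v
  · exact (this hadj.symm ((lt_or_gt_of_ne hadj.ne).resolve_left huv)).symm
  have h₁ := edgeLevel_lt_of_adj huv hadj
  have h₂ := edgeLevel_le_add_two fun x y hux hxy hyv => hno u x y v hux hxy hyv hadj
  omega

end SimpleGraph

lemma orderedArrows_nestedMatching_two_top (n : ℕ) :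
    OrderedArrows (3 * n + 1) (nestedMatching 2) (⊤ : SimpleGraph (Fin (n + 1))) := by
  classical
  intro R
  by_cases hnest : ∃ a b c d : Fin (3 * n + 1), a < b ∧ b < c ∧ c < d ∧ R.Adj a d ∧ R.Adj b c
  · exact Or.inl (orderedSubgraph_nestedMatching_two_iff.2 hnest)
  push Not at hnest
  have hmaps : ∀ v ∈ (univ : Finset (Fin (3 * n + 1))), R.edgeLevel v % 3 ∈ range 3 :=
    fun v _ => mem_range.2 (Nat.mod_lt _ three_pos)
  obtain ⟨r, -, hr⟩ := exists_lt_card_fiber_of_mul_lt_card_of_maps_to (n := n) hmaps (by simp)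
  refine Or.inr (orderedSubgraph_top_of_isClique (s := {v | R.edgeLevel v % 3 = r}) ?_ hr)
  intro u hu v hv huv
  rw [coe_filter_univ, Set.mem_ofPred_eq] at hu hv
  exact (R.compl_adj u v).2
    ⟨huv, fun hadj => SimpleGraph.edgeLevel_mod_three_ne_of_adj hnest hadj (hu.trans hv.symm)⟩

lemma le_of_orderedSubgraph_top_compl_blockGraph {k N m n : ℕ} (hN : N ≤ k * m)
    (h : OrderedSubgraph (⊤ : SimpleGraph (Fin n)) (blockGraph k N)ᶜ) : n ≤ m := by
  obtain ⟨φ, -, hadj⟩ := h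
  let block (i : Fin n) : Fin m := ⟨φ i / k, Nat.div_lt_of_lt_mul ((φ i).2.trans_le hN)⟩
  have hblock : Function.Injective block := by
    intro i j hij
    by_contra hne
    have := (SimpleGraph.compl_adj _ _ _).1 (hadj i j hne)
    exact this.2 ((SimpleGraph.fromRel_adj _ _ _).2 ⟨this.1, Or.inl (Fin.val_eq_of_eq hij)⟩)
  simpa using Fintype.card_le_of_injective block hblock

lemma not_orderedSubgraph_nestedMatching_two_blockGraph_three (N : ℕ) :
    ¬ OrderedSubgraph (nestedMatching 2) (blockGraph 3 N) := by
  rw [orderedSubgraph_nestedMatching_two_iff]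
  rintro ⟨a, b, c, d, hab, hbc, hcd, had, -⟩
  rw [blockGraph, SimpleGraph.fromRel_adj] at had
  rw [Fin.lt_def] at hab hbc hcd
  omega

lemma not_orderedArrows_nestedMatching_two_top (n : ℕ) :
    ¬ OrderedArrows (3 * n) (nestedMatching 2) (⊤ : SimpleGraph (Fin (n + 1))) := fun h =>
  (h (blockGraph 3 (3 * n))).elim (not_orderedSubgraph_nestedMatching_two_blockGraph_three _)
    fun h => by simpa using le_of_orderedSubgraph_top_compl_blockGraph le_rfl h

/-- For every positive integer `n`, `r_<(NM_2, K_n) = 3n - 2`. -/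
theorem stmt_5 (n : ℕ) (hn : 1 ≤ n) :
    orderedRamsey (nestedMatching 2) (⊤ : SimpleGraph (Fin n)) = 3 * n - 2 := by
  obtain ⟨m, rfl⟩ := Nat.exists_eq_add_of_le' hn
  rw [show 3 * (m + 1) - 2 = 3 * m + 1 by omega]
  exact orderedRamsey_eq_succ (orderedArrows_nestedMatching_two_top m)
    (not_orderedArrows_nestedMatching_two_top m)
end

section
/- For all positive integers m and n, the ordered Ramsey number of the nested matching NM_m versus the complete ordered graph on n+1 vertices satisfies the upper bound r_<(NM_m, K_{n+1}) ≤ (4m − 3)n + 1. -/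
/-! Chvátal's argument: if every ordered graph of minimum degree at least `d` contains `G`, then
`r_<(G, K_{n+1}) ≤ d n + 1`, since a vertex of red degree below `d` has at least `d (n - 1) + 1`
blue neighbours, among which we recurse. For `G = NM_m` take `d = 4m - 3`: such a graph on `N`
vertices has more than `2N(m - 1)` edges, so `m` of them have the same endpoint sum, and edges with
equal endpoint sums are pairwise nested. -/

open Finset

section OrderedGraphs

variable {k m N : ℕ}

theorem OrderedSubgraph.trans {G : SimpleGraph (Fin k)} {H : SimpleGraph (Fin m)}
    {K : SimpleGraph (Fin N)} (hGH : OrderedSubgraph G H) (hHK : OrderedSubgraph H K) :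
    OrderedSubgraph G K := by
  obtain ⟨φ, hφ, hφG⟩ := hGH
  obtain ⟨ψ, hψ, hψH⟩ := hHK
  exact ⟨ψ ∘ φ, hψ.comp hφ, fun i j h => hψH _ _ (hφG i j h)⟩

theorem orderedSubgraph_comap {f : Fin k → Fin N} (hf : StrictMono f) (H : SimpleGraph (Fin N)) :
    OrderedSubgraph (H.comap f) H :=
  ⟨f, hf, fun _ _ h => h⟩

theorem orderedSubgraph_top_iff_exists_isNClique {H : SimpleGraph (Fin N)} :
    OrderedSubgraph (⊤ : SimpleGraph (Fin k)) H ↔ ∃ S, H.IsNClique k S := by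
  constructor
  · rintro ⟨φ, hφ, hadj⟩
    refine ⟨univ.map ⟨φ, hφ.injective⟩, ⟨?_, by simp⟩⟩
    rintro _ hx _ hy hxy
    obtain ⟨i, -, rfl⟩ := mem_map.1 hx
    obtain ⟨j, -, rfl⟩ := mem_map.1 hy
    exact hadj i j (ne_of_apply_ne _ hxy)
  · rintro ⟨S, hS⟩
    refine ⟨S.orderEmbOfFin hS.card_eq, (S.orderEmbOfFin _).strictMono, fun i j hij => ?_⟩
    exact hS.isClique (orderEmbOfFin_mem _ _ i) (orderEmbOfFin_mem _ _ j)
      ((S.orderEmbOfFin _).injective.ne hij)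

end OrderedGraphs

theorem card_filter_lt_adj_eq_card_edgeFinset {V : Type*} [LinearOrder V] [Fintype V]
    (R : SimpleGraph V) [DecidableRel R.Adj] :
    #{p : V × V | p.1 < p.2 ∧ R.Adj p.1 p.2} = #R.edgeFinset := by
  refine card_bij (fun p _ => s(p.1, p.2)) (fun p hp => by simpa using (mem_filter.1 hp).2.2)
    (fun p hp q hq h => ?_) (fun e he => ?_)
  · have := (mem_filter.1 hp).2.1; have := (mem_filter.1 hq).2.1
    rcases Sym2.eq_iff.1 h with h | ⟨h1, h2⟩
    · exact Prod.ext h.1 h.2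
    · exact absurd (h1 ▸ h2 ▸ this) (lt_asymm ‹p.1 < p.2›)
  · induction e using Sym2.ind with
    | h x y =>
      have hxy : R.Adj x y := by simpa using he
      rcases hxy.ne.lt_or_gt with h | h
      · exact ⟨(x, y), by simp [h, hxy], rfl⟩
      · exact ⟨(y, x), by simp [h, hxy.symm], Sym2.eq_swap⟩

section NestedMatching

variable {m N : ℕ} {R : SimpleGraph (Fin N)}

theorem nestedMatching_orderedSubgraph_of_sum_eq {a b : Fin m → Fin N} {s : ℕ}
    (ha : StrictMono a) (hab : ∀ i, a i < b i) (hs : ∀ i, (a i : ℕ) + b i = s)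
    (hR : ∀ i, R.Adj (a i) (b i)) : OrderedSubgraph (nestedMatching m) R := by
  have hb : StrictAnti b := fun i j hij => by
    have := ha hij; have := hs i; have := hs j; rw [Fin.lt_def] at *; omega
  have hlt : ∀ i j, a i < b j := fun i j => by
    rcases le_or_gt i j with hij | hij
    · exact (ha.monotone hij).trans_lt (hab j)
    · exact (hab i).trans (hb hij)
  let φ : Fin (2 * m) → Fin N := fun k =>
    if h : (k : ℕ) < m then a ⟨k, h⟩ else b ⟨2 * m - 1 - k, by omega⟩
  have hφ : StrictMono φ := by
    intro k l hkl
    rw [Fin.lt_def] at hkl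
    have := l.isLt
    simp only [φ]
    split_ifs with hk hl hl
    · exact ha (Fin.mk_lt_mk.2 hkl)
    · exact hlt _ _
    · omega
    · exact hb (Fin.mk_lt_mk.2 (by omega))
  have hφR : ∀ k l : Fin (2 * m), (k : ℕ) < l → (k : ℕ) + l = 2 * m - 1 →
      R.Adj (φ k) (φ l) := by
    intro k l hkl hsum
    have hk : (k : ℕ) < m := by omega
    simp only [φ, dif_pos hk, dif_neg (show ¬ (l : ℕ) < m by omega)]
    convert hR ⟨k, hk⟩ using 3
    omega
  refine ⟨φ, hφ, fun k l hkl => ?_⟩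
  obtain ⟨hne, hsum⟩ := (SimpleGraph.fromRel_adj _ _ _).1 hkl
  rcases (Fin.val_ne_of_ne hne).lt_or_gt with h | h
  · exact hφR k l h (by omega)
  · exact (hφR l k h (by omega)).symm

theorem nestedMatching_orderedSubgraph_of_card_le {F : Finset (Fin N × Fin N)} {s : ℕ}
    (hF : ∀ p ∈ F, p.1 < p.2 ∧ (p.1 : ℕ) + p.2 = s ∧ R.Adj p.1 p.2) (hm : m ≤ #F) :
    OrderedSubgraph (nestedMatching m) R := by
  have hinj : Set.InjOn Prod.fst (F : Set (Fin N × Fin N)) := fun p hp q hq h => by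
    have := (hF p hp).2.1; have := (hF q hq).2.1
    exact Prod.ext h (Fin.ext (by rw [Fin.ext_iff] at h; omega))
  obtain ⟨A, hAF, hA⟩ := exists_subset_card_eq ((card_image_of_injOn hinj).symm ▸ hm)
  have hlift : ∀ i, ∃ p ∈ F, p.1 = A.orderEmbOfFin hA i := fun i => by
    simpa using hAF (orderEmbOfFin_mem A hA i)
  choose p hpF hp using hlift
  refine nestedMatching_orderedSubgraph_of_sum_eq (A.orderEmbOfFin hA).strictMono
    (b := fun i => (p i).2) (s := s) (fun i => ?_) (fun i => ?_) (fun i => ?_) <;>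
    rw [← hp i]
  exacts [(hF _ (hpF i)).1, (hF _ (hpF i)).2.1, (hF _ (hpF i)).2.2]

theorem nestedMatching_orderedSubgraph_of_lt_card_edgeFinset [DecidableRel R.Adj]
    (hR : 2 * N * (m - 1) < #R.edgeFinset) : OrderedSubgraph (nestedMatching m) R := by
  rw [← card_filter_lt_adj_eq_card_edgeFinset] at hR
  obtain ⟨s, -, hs⟩ := exists_lt_card_fiber_of_mul_lt_card_of_maps_to
    (f := fun p : Fin N × Fin N => (p.1 : ℕ) + p.2) (t := range (2 * N))
    (fun p _ => by simp; omega) (by simpa using hR)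
  refine nestedMatching_orderedSubgraph_of_card_le (s := s) (fun p hp => ?_) (Nat.le_of_pred_lt hs)
  simp only [mem_filter] at hp
  exact ⟨hp.1.2.1, hp.2, hp.1.2.2⟩

theorem nestedMatching_orderedSubgraph_of_minDegree [DecidableRel R.Adj] (hm : 1 ≤ m) (hN : 0 < N)
    (hdeg : ∀ v, 4 * m - 3 ≤ R.degree v) : OrderedSubgraph (nestedMatching m) R := by
  apply nestedMatching_orderedSubgraph_of_lt_card_edgeFinset
  have hsum : (4 * m - 3) * N ≤ 2 * #R.edgeFinset := by
    rw [← R.sum_degrees_eq_twice_card_edges]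
    calc (4 * m - 3) * N = ∑ _v : Fin N, (4 * m - 3) := by simp [mul_comm]
      _ ≤ ∑ v, R.degree v := sum_le_sum fun v _ => hdeg v
  obtain ⟨m, rfl⟩ := Nat.exists_eq_add_of_le' hm
  rw [show 4 * (m + 1) - 3 = 4 * m + 1 by omega] at hsum
  rw [Nat.add_sub_cancel]
  nlinarith

end NestedMatching

section ChvatalBound

variable {k : ℕ} {G : SimpleGraph (Fin k)} {d : ℕ}

theorem orderedSubgraph_or_compl_top_of_minDegree
    (hG : ∀ (N : ℕ) (R : SimpleGraph (Fin N)) [DecidableRel R.Adj], 0 < N →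
      (∀ v, d ≤ R.degree v) → OrderedSubgraph G R) :
    ∀ (n : ℕ) (R : SimpleGraph (Fin (d * n + 1))),
      OrderedSubgraph G R ∨ OrderedSubgraph (⊤ : SimpleGraph (Fin (n + 1))) Rᶜ := by
  classical
  intro n
  induction n with
  | zero => exact fun _ => Or.inr (orderedSubgraph_top_iff_exists_isNClique.2 ⟨{0}, by simp⟩)
  | succ n ih =>
    intro R
    by_cases hdeg : ∀ v, d ≤ R.degree v
    · exact Or.inl (hG _ R (by omega) hdeg)
    obtain ⟨v, hv⟩ : ∃ v, R.degree v < d := by simpa using hdeg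
    have hcard : d * n + 1 ≤ #(Rᶜ.neighborFinset v) := by
      rw [SimpleGraph.card_neighborFinset_eq_degree, R.degree_compl, Fintype.card_fin]
      have : d * (n + 1) = d * n + d := Nat.mul_succ d n
      omega
    obtain ⟨B, hBv, hB⟩ := exists_subset_card_eq hcard
    set φ := B.orderEmbOfFin hB
    rcases ih (R.comap φ) with hred | hblue
    · exact Or.inl (hred.trans (orderedSubgraph_comap φ.strictMono R))
    obtain ⟨T, hT⟩ := orderedSubgraph_top_iff_exists_isNClique.1 hblue
    have hTφ : Rᶜ.IsNClique (n + 1) (T.map φ.toEmbedding) := by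
      refine hT.map.mono ((SimpleGraph.map_le_iff_le_comap _ _ _).2 ?_)
      rintro i j ⟨hij, hR⟩
      exact ⟨φ.injective.ne hij, hR⟩
    refine Or.inr <| orderedSubgraph_top_iff_exists_isNClique.2
      ⟨insert v _, hTφ.insert fun w hw => ?_⟩
    obtain ⟨i, -, rfl⟩ := mem_map.1 hw
    exact (SimpleGraph.mem_neighborFinset _ _ _).1 (hBv (orderEmbOfFin_mem B hB i))

theorem orderedRamsey_top_le_of_minDegree
    (hG : ∀ (N : ℕ) (R : SimpleGraph (Fin N)) [DecidableRel R.Adj], 0 < N →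
      (∀ v, d ≤ R.degree v) → OrderedSubgraph G R) (n : ℕ) :
    orderedRamsey G (⊤ : SimpleGraph (Fin (n + 1))) ≤ d * n + 1 :=
  Nat.sInf_le (orderedSubgraph_or_compl_top_of_minDegree hG n)

end ChvatalBound

theorem stmt_6_general (m n : ℕ) (hm : 1 ≤ m) :
    orderedRamsey (nestedMatching m) (⊤ : SimpleGraph (Fin (n + 1))) ≤
      (4 * m - 3) * n + 1 :=
  orderedRamsey_top_le_of_minDegree
    (fun _ _ _ hN hdeg => nestedMatching_orderedSubgraph_of_minDegree hm hN hdeg) n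

/-- For all positive integers `m` and `n`,
`r_<(NM_m, K_{n+1}) ≤ (4m - 3) n + 1`. -/
theorem stmt_6 (m n : ℕ) (hm : 1 ≤ m) (hn : 1 ≤ n) :
    orderedRamsey (nestedMatching m) (⊤ : SimpleGraph (Fin (n + 1))) ≤
      (4 * m - 3) * n + 1 :=
  stmt_6_general m n hm
end

section
/- Every good connected ordered graph is an ordered tree; that is, if a connected ordered graph G is n-good for every positive integer n, then the underlying graph of G contains no cycle. -/
open Finset SimpleGraph

namespace Finset

variable {α : Type*}

lemma card_sym2_filter_not_isDiag [DecidableEq α] (T : Finset α) :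
    #{e ∈ T.sym2 | ¬e.IsDiag} = (#T).choose 2 := by
  have hdiag : {e ∈ T.sym2 | e.IsDiag} = T.image Sym2.diag := by
    ext e
    induction e with | _ a b => ?_
    simp only [mem_filter, mk_mem_sym2_iff, Sym2.mk_isDiag_iff, mem_image, Sym2.diag]
    constructor
    · rintro ⟨⟨ha, -⟩, rfl⟩; exact ⟨a, ha, rfl⟩
    · rintro ⟨c, hc, h⟩
      rcases Sym2.eq_iff.1 h with ⟨rfl, rfl⟩ | ⟨rfl, rfl⟩ <;> simp [hc]
  have := card_filter_add_card_filter_not (s := T.sym2) Sym2.IsDiag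
  rw [hdiag, card_image_of_injective _ Sym2.diag_injective, card_sym2,
    Nat.choose_succ_succ' _ 1, Nat.choose_one_right] at this
  norm_num at this
  omega

lemma sum_pow_card_filter_card_le [Fintype α] {x : ℝ} (hx : 0 ≤ x)
    (h : 1 ≤ Fintype.card α * x) (m : ℕ) :
    ∑ S : Finset α with #S ≤ m, x ^ #S ≤ (m + 1) * (Fintype.card α * x) ^ m := by
  set N := Fintype.card α
  rw [sum_filter, ← powerset_univ,
    sum_powerset_apply_card (fun j => if j ≤ m then x ^ j else 0), card_univ]
  calc ∑ j ∈ range (N + 1), N.choose j • (if j ≤ m then x ^ j else 0)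
      = ∑ j ∈ range (N + 1) with j ≤ m, (N.choose j : ℝ) * x ^ j := by
        rw [sum_filter]; simp [nsmul_eq_mul]
    _ ≤ ∑ j ∈ range (m + 1), (N.choose j : ℝ) * x ^ j := by
        refine sum_le_sum_of_subset_of_nonneg (fun j hj => ?_) fun j _ _ => by positivity
        simp only [mem_filter, mem_range] at hj ⊢; omega
    _ ≤ ∑ _j ∈ range (m + 1), ((N : ℝ) * x) ^ m := by
        refine sum_le_sum fun j hj => ?_
        calc (N.choose j : ℝ) * x ^ j ≤ (N : ℝ) ^ j * x ^ j := by
              gcongr; exact_mod_cast N.choose_le_pow j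
          _ = ((N : ℝ) * x) ^ j := (mul_pow _ _ _).symm
          _ ≤ ((N : ℝ) * x) ^ m := pow_le_pow_right₀ h (Nat.lt_succ_iff.1 (mem_range.1 hj))
    _ = (m + 1) * ((N : ℝ) * x) ^ m := by simp

end Finset

namespace SimpleGraph

variable {V W : Type*} {G : SimpleGraph V} {H : SimpleGraph W}

lemma Walk.IsCycle.card_support_tail_toFinset [DecidableEq V] {u : V} {c : G.Walk u u}
    (hc : c.IsCycle) : #c.support.tail.toFinset = c.length := by
  rw [List.toFinset_card_of_nodup hc.support_nodup, List.length_tail, length_support,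
    Nat.add_sub_cancel]

lemma Walk.IsCycle.length_le_card [Fintype V] {u : V} {c : G.Walk u u} (hc : c.IsCycle) :
    c.length ≤ Fintype.card V := by
  classical
  exact hc.card_support_tail_toFinset ▸ card_le_univ _

lemma egirth_le_card [Fintype V] (hG : ¬G.IsAcyclic) : G.egirth ≤ Fintype.card V := by
  obtain ⟨u, c, hc, hlen⟩ := exists_egirth_eq_length.2 hG
  exact hlen ▸ by exact_mod_cast hc.length_le_card

lemma IndepSetFree.comap {n : ℕ} (f : W ↪ V) (h : G.IndepSetFree n) :
    (G.comap f).IndepSetFree n := by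
  rw [← cliqueFree_compl] at h ⊢
  refine h.comap ⟨⟨⟨f, fun {a b} hab => ?_⟩, f.injective⟩⟩
  simp only [compl_adj, comap_adj] at hab ⊢
  exact ⟨f.injective.ne hab.1, hab.2⟩

lemma Walk.IsCycle.card_le_card_sym2_inter [DecidableEq V] {E : Finset (Sym2 V)} {u : V}
    {c : (fromEdgeSet (E : Set (Sym2 V))).Walk u u} (hc : c.IsCycle) :
    #c.support.tail.toFinset ≤ #(c.support.tail.toFinset.sym2 ∩ E) := by
  have hmem : ∀ v ∈ c.support, v ∈ c.support.tail := fun v hv => by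
    rcases (Walk.mem_support_iff c).1 hv with rfl | hv
    exacts [c.end_mem_tail_support hc.not_nil, hv]
  have hedges : c.edges.toFinset ⊆ c.support.tail.toFinset.sym2 ∩ E := by
    intro e he
    rw [List.mem_toFinset] at he
    refine mem_inter.2 ⟨mem_sym2_iff.2 fun v hv => List.mem_toFinset.2 <|
      hmem v (c.mem_support_of_mem_edges he hv), ?_⟩
    have := c.edges_subset_edgeSet he
    rw [edgeSet_fromEdgeSet] at this
    exact_mod_cast this.1
  calc #c.support.tail.toFinset = #c.edges.toFinset := by
        rw [hc.card_support_tail_toFinset, List.toFinset_card_of_nodup hc.edges_nodup,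
          length_edges]
    _ ≤ _ := card_le_card hedges

end SimpleGraph

namespace RandomSubset

variable {ι : Type*} [Fintype ι] [DecidableEq ι] {p : ℝ}

/-- The probability that the `p`-random subset of `ι`, containing each element independently with
probability `p`, equals `F`. -/
noncomputable def weight (p : ℝ) (F : Finset ι) : ℝ := p ^ #F * (1 - p) ^ #Fᶜ

lemma weight_nonneg (hp0 : 0 ≤ p) (hp1 : p ≤ 1) (F : Finset ι) : 0 ≤ weight p F :=
  mul_nonneg (pow_nonneg hp0 _) (pow_nonneg (sub_nonneg.2 hp1) _)

lemma sum_weight_superset (p : ℝ) (A : Finset ι) : ∑ F with A ⊆ F, weight p F = p ^ #A := by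
  have key := Fintype.prod_add (fun _ : ι => p) (fun i => if i ∉ A then 1 - p else 0)
  simp only [prod_const, prod_ite_zero] at key
  rw [sum_filter]
  calc ∑ F, (if A ⊆ F then weight p F else 0)
      = ∑ F, p ^ #F * if ∀ i ∈ Fᶜ, i ∉ A then (1 - p) ^ #Fᶜ else 0 := by
        refine sum_congr rfl fun F _ => ?_
        have : (∀ i ∈ Fᶜ, i ∉ A) ↔ A ⊆ F := by
          simp only [mem_compl, subset_iff]; exact forall_congr' fun i => not_imp_not
        simp only [this, weight]; split_ifs <;> simp
    _ = ∏ i, (p + if i ∉ A then 1 - p else 0) := key.symm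
    _ = ∏ i, if i ∈ A then p else 1 := by congr; ext i; split_ifs <;> simp_all
    _ = p ^ #A := by rw [Fintype.prod_ite_mem, prod_const]

lemma sum_weight_disjoint (p : ℝ) (A : Finset ι) :
    ∑ F with Disjoint A F, weight p F = (1 - p) ^ #A := by
  have key := Fintype.prod_add (fun i => if i ∉ A then p else 0) (fun _ : ι => 1 - p)
  simp only [prod_const, prod_ite_zero] at key
  rw [sum_filter]
  calc ∑ F, (if Disjoint A F then weight p F else 0)
      = ∑ F, (if ∀ i ∈ F, i ∉ A then p ^ #F else 0) * (1 - p) ^ #Fᶜ := by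
        refine sum_congr rfl fun F _ => ?_
        simp only [disjoint_right, weight]; split_ifs <;> simp
    _ = ∏ i, ((if i ∉ A then p else 0) + (1 - p)) := key.symm
    _ = ∏ i, if i ∈ A then 1 - p else 1 := by congr; ext i; split_ifs <;> simp_all
    _ = (1 - p) ^ #A := by rw [Fintype.prod_ite_mem, prod_const]

lemma sum_weight (p : ℝ) : ∑ F : Finset ι, weight p F = 1 := by
  simpa using sum_weight_superset p (∅ : Finset ι)

lemma sum_weight_mul_card_filter {κ : Type*} (p : ℝ) (I : Finset κ)
    (r : κ → Finset ι → Prop) [∀ x, DecidablePred (r x)] :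
    ∑ F, weight p F * #{x ∈ I | r x F} = ∑ x ∈ I, ∑ F with r x F, weight p F := by
  simp only [card_filter, Nat.cast_sum, Nat.cast_ite, Nat.cast_one, Nat.cast_zero, mul_sum,
    mul_ite, mul_one, mul_zero, sum_filter]
  exact sum_comm

lemma exists_lt_one_of_sum_weight_mul_lt_one (hp0 : 0 ≤ p) (hp1 : p ≤ 1) (f : Finset ι → ℝ)
    (h : ∑ F, weight p F * f F < 1) : ∃ F, f F < 1 := by
  by_contra! hf
  refine h.not_ge ?_
  calc (1 : ℝ) = ∑ F, weight p F * 1 := by simp [sum_weight]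
    _ ≤ ∑ F, weight p F * f F :=
      sum_le_sum fun F _ => mul_le_mul_of_nonneg_left (hf F) (weight_nonneg hp0 hp1 F)

lemma sum_weight_le_of_imp {κ : Type*} (hp0 : 0 ≤ p) (hp1 : p ≤ 1) (P : Finset ι → Prop)
    [DecidablePred P] (I : Finset κ) (r : κ → Finset ι → Prop) [∀ x, DecidablePred (r x)]
    (h : ∀ F, P F → ∃ x ∈ I, r x F) :
    ∑ F with P F, weight p F ≤ ∑ x ∈ I, ∑ F with r x F, weight p F := by
  rw [← sum_weight_mul_card_filter, sum_filter]
  refine sum_le_sum fun F _ => ?_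
  split_ifs with hP
  · obtain ⟨x, hx, hr⟩ := h F hP
    have : (1 : ℝ) ≤ #{x ∈ I | r x F} := by
      exact_mod_cast card_pos.2 ⟨x, mem_filter.2 ⟨hx, hr⟩⟩
    nlinarith [weight_nonneg hp0 hp1 F]
  · exact mul_nonneg (weight_nonneg hp0 hp1 F) (Nat.cast_nonneg _)

lemma sum_weight_le_card_inter_le (hp0 : 0 ≤ p) (hp1 : p ≤ 1) (B : Finset ι) (j : ℕ) :
    ∑ F with j ≤ #(B ∩ F), weight p F ≤ (#B).choose j * p ^ j := by
  calc ∑ F with j ≤ #(B ∩ F), weight p F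
      ≤ ∑ T ∈ B.powersetCard j, ∑ F with T ⊆ F, weight p F := by
        refine sum_weight_le_of_imp hp0 hp1 _ _ _ fun F hF => ?_
        obtain ⟨T, hTBF, hT⟩ := exists_subset_card_eq hF
        exact ⟨T, mem_powersetCard.2 ⟨hTBF.trans inter_subset_left, hT⟩,
          hTBF.trans inter_subset_right⟩
    _ = (#B).choose j * p ^ j := by
        rw [sum_congr rfl fun T hT => by rw [sum_weight_superset, (mem_powersetCard.1 hT).2],
          sum_const, card_powersetCard, nsmul_eq_mul]

end RandomSubset

namespace RandomGraph

open SimpleGraph RandomSubset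

variable {V : Type*} [Fintype V] [DecidableEq V] {p : ℝ}

def edgeGraph (E : Finset (Sym2 V)) : SimpleGraph V := fromEdgeSet E

/-- The vertex set of every cycle of length at most `m` in `edgeGraph E` belongs to this family
(`Walk.IsCycle.card_le_card_sym2_inter`); loops `s(v, v) ∈ E` are counted too, which only enlarges
it. -/
def denseSets (m : ℕ) (E : Finset (Sym2 V)) : Finset (Finset V) :=
  {S | #S ≤ m ∧ #S ≤ #(S.sym2 ∩ E)}

open scoped Classical in
lemma sum_weight_not_indepSetFree_le (hp0 : 0 ≤ p) (hp1 : p ≤ 1) (n : ℕ) :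
    ∑ E : Finset (Sym2 V) with ¬(edgeGraph E).IndepSetFree n, weight p E
      ≤ (Fintype.card V).choose n * (1 - p) ^ n.choose 2 := by
  calc ∑ E : Finset (Sym2 V) with ¬(edgeGraph E).IndepSetFree n, weight p E
      ≤ ∑ T ∈ (univ : Finset V).powersetCard n,
          ∑ E with Disjoint {e ∈ T.sym2 | ¬e.IsDiag} E, weight p E := by
        refine sum_weight_le_of_imp hp0 hp1 _ _ _ fun E hE => ?_
        obtain ⟨T, hT⟩ := not_forall_not.1 hE
        refine ⟨T, mem_powersetCard_univ.2 hT.card_eq, disjoint_left.2 fun e he heE => ?_⟩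
        induction e with | _ a b => ?_
        simp only [mem_filter, mk_mem_sym2_iff, Sym2.mk_isDiag_iff] at he
        exact hT.isIndepSet he.1.1 he.1.2 he.2
          (by simpa [edgeGraph, fromEdgeSet_adj] using ⟨heE, he.2⟩)
    _ = (Fintype.card V).choose n * (1 - p) ^ n.choose 2 := by
        rw [sum_congr rfl fun T hT => by
            rw [sum_weight_disjoint, card_sym2_filter_not_isDiag, (mem_powersetCard.1 hT).2],
          sum_const, card_powersetCard, card_univ, nsmul_eq_mul]

lemma sum_weight_mul_card_denseSets_le (hp0 : 0 ≤ p) (hp1 : p ≤ 1)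
    (hNp : 1 ≤ Fintype.card V * p) (m : ℕ) :
    ∑ E : Finset (Sym2 V), weight p E * #(denseSets m E)
      ≤ (m + 1) * 2 ^ (m ^ 2) * (Fintype.card V * p) ^ m := by
  calc ∑ E : Finset (Sym2 V), weight p E * #(denseSets m E)
      = ∑ S : Finset V with #S ≤ m, ∑ E with #S ≤ #(S.sym2 ∩ E), weight p E := by
        simp_rw [denseSets, ← filter_filter]
        exact sum_weight_mul_card_filter p _ fun S E => #S ≤ #(S.sym2 ∩ E)
    _ ≤ ∑ S : Finset V with #S ≤ m, 2 ^ (m ^ 2) * p ^ #S := by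
        refine sum_le_sum fun S hS => (sum_weight_le_card_inter_le hp0 hp1 _ _).trans ?_
        have hsym2 : #S.sym2 ≤ m ^ 2 := by
          have hS := (mem_filter.1 hS).2
          rw [card_sym2, Nat.choose_two_right, Nat.add_sub_cancel]
          exact Nat.div_le_of_le_mul (by nlinarith [Nat.le_mul_self #S])
        gcongr
        exact_mod_cast (Nat.choose_le_two_pow _ _).trans (Nat.pow_le_pow_right two_pos hsym2)
    _ ≤ 2 ^ (m ^ 2) * ((m + 1) * (Fintype.card V * p) ^ m) := by
        rw [← mul_sum]; gcongr; exact sum_pow_card_filter_card_le hp0 hNp m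
    _ = (m + 1) * 2 ^ (m ^ 2) * (Fintype.card V * p) ^ m := by ring

lemma exists_indepSetFree_card_denseSets_lt (hp0 : 0 ≤ p) (hp1 : p ≤ 1)
    (hNp : 1 ≤ Fintype.card V * p) {m n : ℕ}
    (hind : ((Fintype.card V).choose n : ℝ) * (1 - p) ^ n.choose 2 ≤ 1 / 4) :
    ∃ E : Finset (Sym2 V), (edgeGraph E).IndepSetFree n ∧
      (#(denseSets m E) : ℝ) < 2 * ((m + 1) * 2 ^ (m ^ 2) * (Fintype.card V * p) ^ m) := by
  classical
  set W := (m + 1) * 2 ^ (m ^ 2) * (Fintype.card V * p) ^ m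
  have hW : 0 < W := by positivity
  obtain ⟨E, hE⟩ := exists_lt_one_of_sum_weight_mul_lt_one hp0 hp1
    (fun E : Finset (Sym2 V) =>
      (if (edgeGraph E).IndepSetFree n then 0 else 1) + #(denseSets m E) / (2 * W)) <| by
      calc ∑ E, weight p E * ((if (edgeGraph E).IndepSetFree n then 0 else 1) +
              #(denseSets m E) / (2 * W))
          = ∑ E : Finset (Sym2 V) with ¬(edgeGraph E).IndepSetFree n, weight p E +
              (∑ E, weight p E * #(denseSets m E)) / (2 * W) := by
            simp only [mul_add, sum_add_distrib, mul_ite, mul_zero, mul_one, sum_div,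
              mul_div_assoc, sum_filter, ite_not]
            congr
        _ ≤ 1 / 4 + W / (2 * W) := by
            gcongr
            · exact (sum_weight_not_indepSetFree_le hp0 hp1 n).trans hind
            · exact sum_weight_mul_card_denseSets_le hp0 hp1 hNp m
        _ < 1 := by rw [div_mul_cancel_right₀ hW.ne']; norm_num
  have hindep : (edgeGraph E).IndepSetFree n := by
    by_contra h
    simp only [h, if_false] at hE
    linarith [div_nonneg (Nat.cast_nonneg #(denseSets m E)) (by positivity : (0 : ℝ) ≤ 2 * W)]
  simp only [hindep, if_true, zero_add, div_lt_one (by positivity : (0 : ℝ) < 2 * W)] at hE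
  exact ⟨E, hindep, hE⟩

lemma exists_indepSetFree_lt_egirth_of_card_denseSets {M m n : ℕ} (E : Finset (Sym2 V))
    (hE : (edgeGraph E).IndepSetFree n) (hM : M + m * #(denseSets m E) ≤ Fintype.card V) :
    ∃ H : SimpleGraph (Fin M), H.IndepSetFree n ∧ (m : ℕ∞) < H.egirth := by
  set D := (denseSets m E).biUnion (id : Finset V → Finset V)
  have hD : M ≤ #Dᶜ := by
    have : #D ≤ m * #(denseSets m E) := by
      refine (card_biUnion_le_card_mul _ _ m fun S hS => ?_).trans_eq (mul_comm _ _)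
      exact (mem_filter.1 hS).2.1
    rw [card_compl]; omega
  obtain ⟨g⟩ : Nonempty (Fin M ↪ {v // v ∈ Dᶜ}) :=
    Function.Embedding.nonempty_of_card_le (by rwa [Fintype.card_fin, Fintype.card_coe])
  set f : Fin M ↪ V := g.trans (Function.Embedding.subtype _)
  have hfD : ∀ i, f i ∉ D := fun i => mem_compl.1 (g i).2
  refine ⟨(edgeGraph E).comap f, hE.comap f, ?_⟩
  rw [← ENat.add_one_le_iff (ENat.natCast_ne_top m), le_egirth]
  intro u c hc
  by_contra! hlen
  have hc' := hc.map (f := (Embedding.comap f (edgeGraph E)).toHom) f.injective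
  set S := (c.map (Embedding.comap f (edgeGraph E)).toHom).support.tail.toFinset
  have hSm : #S ≤ m := by
    rw [hc'.card_support_tail_toFinset, Walk.length_map]
    have : c.length < m + 1 := by exact_mod_cast hlen
    omega
  have hSD : S ⊆ D := fun v hv =>
    mem_biUnion.2 ⟨S, mem_filter.2 ⟨mem_univ _, hSm, hc'.card_le_card_sym2_inter⟩, hv⟩
  obtain ⟨v, hv⟩ : S.Nonempty := by
    rw [← card_pos, hc'.card_support_tail_toFinset]
    exact hc'.three_le_length.trans_lt' (by norm_num)
  have hv' := List.mem_toFinset.1 hv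
  rw [Walk.support_map] at hv'
  obtain ⟨w, -, rfl⟩ := List.mem_map.1 (List.mem_of_mem_tail hv')
  exact hfD w (hSD hv)

end RandomGraph

-- The expected number of independent `n`-sets in `G(2^L, 1/s)` for `n = 2s(L + 2) + 1`.
lemma choose_mul_one_sub_inv_pow_le {s L : ℕ} (hs : 1 ≤ s) :
    ((2 ^ L).choose (2 * s * (L + 2) + 1) : ℝ) *
      (1 - (s : ℝ)⁻¹) ^ (2 * s * (L + 2) + 1).choose 2 ≤ 1 / 4 := by
  have hchoose : (2 * s * (L + 2) + 1).choose 2 = s * ((2 * s * (L + 2) + 1) * (L + 2)) := by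
    rw [Nat.choose_two_right, Nat.add_sub_cancel,
      show (2 * s * (L + 2) + 1) * (2 * s * (L + 2)) = 2 * (s * ((2 * s * (L + 2) + 1) * (L + 2)))
        by ring, Nat.mul_div_cancel_left _ two_pos]
  set n := 2 * s * (L + 2) + 1
  have hs' : (1 : ℝ) ≤ s := by exact_mod_cast hs
  have hhalf : (1 - (s : ℝ)⁻¹) ^ s ≤ 1 / 2 := by
    have := Real.one_sub_div_pow_le_exp_neg (n := s) (t := 1) hs'
    rw [one_div] at this
    linarith [Real.exp_neg_one_lt_half]
  calc ((2 ^ L).choose n : ℝ) * (1 - (s : ℝ)⁻¹) ^ n.choose 2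
      ≤ ((2 : ℝ) ^ L) ^ n * (1 / 2) ^ (n * (L + 2)) := by
        have h0 : 0 ≤ 1 - (s : ℝ)⁻¹ := sub_nonneg.2 (inv_le_one_of_one_le₀ hs')
        rw [hchoose, pow_mul]
        exact mul_le_mul (by exact_mod_cast Nat.choose_le_pow _ _)
          (pow_le_pow_left₀ (pow_nonneg h0 _) hhalf _) (by positivity) (by positivity)
    _ = (1 / 4) ^ n := by
        have : (2 : ℝ) ^ L * (1 / 2) ^ (L + 2) = 1 / 4 := by
          rw [pow_add, ← mul_assoc, ← mul_pow]; norm_num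
        rw [pow_mul', ← mul_pow, this]
    _ ≤ 1 / 4 := pow_le_of_le_one (by norm_num) (by norm_num) (by omega)

lemma exists_mul_add_le_two_pow (a b : ℕ) : ∃ z, a * z + b ≤ 2 ^ z := by
  refine ⟨2 * (a + b + 1), ?_⟩
  have := Nat.two_mul_sq_add_one_le_two_pow_two_mul (a + b + 1)
  nlinarith

-- With `s = 2^t`, `N = 2^(t+z)`, `n - 1 = 2s(t + z + 2)` and fewer than
-- `2W = 2(m + 1) 2^(m²) (N/s)^m` dense sets, this is `(m - 1)(n - 1) + 1 + m · 2W ≤ N`.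
lemma exists_deletion_exponents (m : ℕ) : ∃ t z : ℕ,
    (m - 1) * (2 * 2 ^ t * (t + z + 2)) + 1 + m * (2 * ((m + 1) * 2 ^ (m ^ 2) * 2 ^ (z * m)))
      ≤ 2 ^ (t + z) := by
  obtain ⟨z, hz⟩ :=
    exists_mul_add_le_two_pow (4 * (m - 1) * (m + 1)) (4 * (m - 1) * (m ^ 2 + 2 * m + 4) + 2)
  refine ⟨m ^ 2 + z * m + 2 * m + 2, z, ?_⟩
  set t := m ^ 2 + z * m + 2 * m + 2 with ht
  have hA : 4 * (m - 1) * (t + z + 2) + 2 ≤ 2 ^ z := by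
    convert hz using 1; ring
  have hB : 4 * m * (m + 1) ≤ 2 ^ (2 * m + 2 + z) := by
    have h1 : m + 1 ≤ 2 ^ m := Nat.lt_two_pow_self
    calc 4 * m * (m + 1) ≤ 2 ^ m * 2 ^ m * 2 ^ 2 := by nlinarith
      _ ≤ 2 ^ (2 * m + 2 + z) := by
        rw [← pow_add, ← pow_add]; exact Nat.pow_le_pow_right two_pos (by omega)
  have h1 : 2 * ((m - 1) * (2 * 2 ^ t * (t + z + 2)) + 1) ≤ 2 ^ t * 2 ^ z := by
    have := Nat.one_le_two_pow (n := t)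
    calc 2 * ((m - 1) * (2 * 2 ^ t * (t + z + 2)) + 1)
        ≤ 2 ^ t * (4 * (m - 1) * (t + z + 2) + 2) := by nlinarith
      _ ≤ 2 ^ t * 2 ^ z := Nat.mul_le_mul_left _ hA
  have h2 : 2 * (m * (2 * ((m + 1) * 2 ^ (m ^ 2) * 2 ^ (z * m))))
      ≤ 2 ^ (m ^ 2) * 2 ^ (z * m) * 2 ^ (2 * m + 2 + z) := by
    calc 2 * (m * (2 * ((m + 1) * 2 ^ (m ^ 2) * 2 ^ (z * m))))
        = 2 ^ (m ^ 2) * 2 ^ (z * m) * (4 * m * (m + 1)) := by ring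
      _ ≤ _ := Nat.mul_le_mul_left _ hB
  have h3 : 2 ^ (t + z) = 2 ^ t * 2 ^ z := pow_add _ _ _
  have h4 : 2 ^ (t + z) = 2 ^ (m ^ 2) * 2 ^ (z * m) * 2 ^ (2 * m + 2 + z) := by
    rw [← pow_add, ← pow_add, ht]; ring_nf
  omega

open RandomGraph in
theorem exists_indepSetFree_lt_egirth (m : ℕ) :
    ∃ n, 1 ≤ n ∧ ∃ H : SimpleGraph (Fin ((m - 1) * (n - 1) + 1)),
      H.IndepSetFree n ∧ (m : ℕ∞) < H.egirth := by
  obtain ⟨t, z, hroom⟩ := exists_deletion_exponents m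
  set s := 2 ^ t
  have hs : 1 ≤ s := Nat.one_le_two_pow
  have hNp : (Fintype.card (Fin (2 ^ (t + z))) : ℝ) * (s : ℝ)⁻¹ = 2 ^ z := by
    simp [s, pow_add]
    field_simp
  obtain ⟨E, hE, hdense⟩ := exists_indepSetFree_card_denseSets_lt (m := m)
    (inv_nonneg.2 (Nat.cast_nonneg s)) (inv_le_one_of_one_le₀ (by exact_mod_cast hs))
    (hNp ▸ one_le_pow₀ one_le_two)
    (by simpa [pow_add] using choose_mul_one_sub_inv_pow_le (L := t + z) hs)
  rw [hNp, ← pow_mul] at hdense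
  have hdense' : #(denseSets m E) < 2 * ((m + 1) * 2 ^ (m ^ 2) * 2 ^ (z * m)) := by
    exact_mod_cast hdense
  refine ⟨2 * s * (t + z + 2) + 1, by omega,
    exists_indepSetFree_lt_egirth_of_card_denseSets E hE ?_⟩
  rw [Fintype.card_fin, Nat.add_sub_cancel]
  nlinarith

lemma isContained_of_orderedSubgraph {m N : ℕ} {G : SimpleGraph (Fin m)} {H : SimpleGraph (Fin N)}
    (h : OrderedSubgraph G H) : G ⊑ H := by
  obtain ⟨φ, hφ, hadj⟩ := h
  exact ⟨⟨⟨φ, hadj _ _⟩, hφ.injective⟩⟩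

lemma orderedSubgraph_or_of_orderedRamsey_eq_succ {m k M : ℕ} {G : SimpleGraph (Fin m)}
    {K : SimpleGraph (Fin k)} (h : orderedRamsey G K = M + 1) (R : SimpleGraph (Fin (M + 1))) :
    OrderedSubgraph G R ∨ OrderedSubgraph K Rᶜ := by
  have hmem := Nat.sInf_mem (Nat.nonempty_of_sInf_eq_succ h)
  rw [orderedRamsey] at h
  rw [h] at hmem
  exact hmem R

theorem stmt_8_general (m : ℕ) (G : SimpleGraph (Fin m))
    (hgood : ∀ n : ℕ, 1 ≤ n → IsNGood n G) :
    G.IsAcyclic := by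
  by_contra hcyc
  obtain ⟨n, hn, H, hindep, hgirth⟩ := exists_indepSetFree_lt_egirth m
  rcases orderedSubgraph_or_of_orderedRamsey_eq_succ (hgood n hn).2 H with hred | hblue
  · have hle : H.egirth ≤ m :=
      (isContained_of_orderedSubgraph hred).egirth_le.trans (by simpa using egirth_le_card hcyc)
    exact hle.not_gt hgirth
  · exact (isContained_of_orderedSubgraph hblue).not_cliqueFree ((cliqueFree_compl H).2 hindep)

/-- Every good connected ordered graph is an ordered tree: if a connected
ordered graph `G` is `n`-good for every positive integer `n`, then `G` is acyclic. -/
theorem stmt_8 (m : ℕ) (G : SimpleGraph (Fin m)) (hG : G.Connected)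
    (hgood : ∀ n : ℕ, 1 ≤ n → IsNGood n G) :
    G.IsAcyclic :=
  stmt_8_general m G hgood
end
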